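/- For all sufficiently large even n and for every fixed vector x ∈ S^{n-1}, P( ‖x^⊤ M_n‖₂ ≤ √n/36 ) ≤ e^{-n/400}, where x^⊤ M_n denotes the row vector obtained by multiplying M_n on the left by x. -/

import Mathlib

open MeasureTheory ProbabilityTheory Real

noncomputable section

/-- Euclidean norm of a finitely indexed real vector. -/
def pnorm {ι : Type*} [Fintype ι] (x : ι → ℝ) : ℝ := Real.sqrt (∑ i, x i ^ 2)

/-- The set of "signed rows": vectors in `{-1,0,1}^n` with exactly `n/2` zero coordinates. -/
def signedRow (n : ℕ) : Set (Fin n → ℝ) :=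
  {v | (∀ i, v i = -1 ∨ v i = 0 ∨ v i = 1) ∧ Nat.card {i : Fin n // v i = 0} = n / 2}

/-!
Put `Φ(A) = exp(-‖xᵀA‖²/6)`. On the event `‖xᵀM‖ ≤ √n/36` we have `Φ(M) ≥ e^{-n/7776}`, so by
Markov's inequality it suffices to show `𝔼 Φ(M) ≤ e^{-n/24}`.

The law of `M` is invariant under flipping the signs of any pattern of entries. Averaging over all
sign patterns turns the coordinates of `xᵀM` into independent Rademacher sums
`∑ᵢ xᵢ Mᵢⱼ εᵢⱼ` with variances `σⱼ² ≤ 1`. For such a sum `Z`, the bound `e^{-u} ≤ 1 - u + u²`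
together with `𝔼 Z² = σ²` and `𝔼 Z⁴ ≤ 3σ⁴` gives `𝔼 e^{-Z²/6} ≤ e^{-σ²/12}`. Since every row of
`M` has exactly `n/2` entries `±1`, `∑ⱼ σⱼ² = n/2`, whence `𝔼 Φ(M) ≤ e^{-n/24}`.
-/

open Finset
open scoped ENNReal

def boolSign (b : Bool) : ℝ := if b then 1 else -1

@[simp] lemma boolSign_ne_zero (b : Bool) : boolSign b ≠ 0 := by cases b <;> simp [boolSign]

@[simp] lemma boolSign_mul_self (b : Bool) : boolSign b * boolSign b = 1 := by
  cases b <;> simp [boolSign]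

def signedSum {ι : Type*} [Fintype ι] (a : ι → ℝ) (δ : ι → Bool) : ℝ := ∑ i, a i * boolSign (δ i)

section SignedSum

variable {m : ℕ}

lemma sum_fun_fin_succ {α M : Type*} [Fintype α] [AddCommMonoid M]
    (F : (Fin (m + 1) → α) → M) : ∑ δ, F δ = ∑ d : Fin m → α, ∑ b : α, F (Fin.cons b d) := by
  rw [← Fintype.sum_equiv (Fin.consEquiv fun _ => α) (fun p => F (Fin.cons p.1 p.2)) F
    fun _ => rfl, Fintype.sum_prod_type, Finset.sum_comm]

lemma signedSum_cons (a : Fin (m + 1) → ℝ) (b : Bool) (d : Fin m → Bool) :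
    signedSum a (Fin.cons b d) = a 0 * boolSign b + signedSum (fun i => a i.succ) d := by
  simp [signedSum, Fin.sum_univ_succ]

lemma sum_signedSum_sq (a : Fin m → ℝ) :
    ∑ δ, signedSum a δ ^ 2 = 2 ^ m * ∑ i, a i ^ 2 := by
  induction m with
  | zero => simp [signedSum]
  | succ m ih =>
    have hpair : ∀ d, ∑ b : Bool, signedSum a (Fin.cons b d) ^ 2
        = 2 * a 0 ^ 2 + 2 * signedSum (fun i => a i.succ) d ^ 2 := by
      intro d; simp [signedSum_cons, boolSign]; ring
    simp only [sum_fun_fin_succ, hpair, sum_add_distrib, ← mul_sum, ih, Fin.sum_univ_succ,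
      sum_const, card_univ, Fintype.card_fun, Fintype.card_bool, Fintype.card_fin, nsmul_eq_mul]
    push_cast
    ring

lemma sum_signedSum_pow_four_le (a : Fin m → ℝ) :
    ∑ δ, signedSum a δ ^ 4 ≤ 3 * 2 ^ m * (∑ i, a i ^ 2) ^ 2 := by
  induction m with
  | zero => simp [signedSum]
  | succ m ih =>
    set a' : Fin m → ℝ := fun i => a i.succ
    have hpair : ∀ d, ∑ b : Bool, signedSum a (Fin.cons b d) ^ 4
        = 2 * a 0 ^ 4 + 12 * a 0 ^ 2 * signedSum a' d ^ 2 + 2 * signedSum a' d ^ 4 := by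
      intro d; simp [signedSum_cons, boolSign, a']; ring
    simp only [sum_fun_fin_succ, hpair, sum_add_distrib, ← mul_sum, sum_signedSum_sq,
      Fin.sum_univ_succ, sum_const, card_univ, Fintype.card_fun, Fintype.card_bool,
      Fintype.card_fin, nsmul_eq_mul]
    have h2m : (0 : ℝ) < 2 ^ m := by positivity
    change _ ≤ 3 * 2 ^ (m + 1) * (a 0 ^ 2 + ∑ i, a' i ^ 2) ^ 2
    push_cast
    rw [pow_succ (2 : ℝ) m]
    nlinarith [ih a', mul_nonneg h2m.le (pow_nonneg (sq_nonneg (a 0)) 2)]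

end SignedSum

lemma exp_neg_le_one_sub_add_sq {u : ℝ} (hu : 0 ≤ u) : exp (-u) ≤ 1 - u + u ^ 2 := by
  have h : 1 ≤ (1 - u + u ^ 2) * exp u := by
    nlinarith [add_one_le_exp u, pow_nonneg hu 3, sq_nonneg (u - 1 / 2)]
  rw [exp_neg, inv_le_iff_one_le_mul₀ (exp_pos u)]
  linarith

lemma sum_exp_neg_signedSum_sq_le {m : ℕ} (a : Fin m → ℝ) (ha : ∑ i, a i ^ 2 ≤ 1) :
    ∑ δ, exp (-signedSum a δ ^ 2 / 6) ≤ 2 ^ m * exp (-(∑ i, a i ^ 2) / 12) := by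
  set σ := ∑ i, a i ^ 2
  have hσ : 0 ≤ σ := Fintype.sum_nonneg fun i => sq_nonneg (a i)
  have h2m : (0 : ℝ) < 2 ^ m := by positivity
  calc ∑ δ, exp (-signedSum a δ ^ 2 / 6)
      ≤ ∑ δ, (1 - signedSum a δ ^ 2 / 6 + signedSum a δ ^ 4 / 36) := by
        gcongr with δ
        rw [neg_div]
        exact (exp_neg_le_one_sub_add_sq (by positivity)).trans_eq (by ring)
    _ = 2 ^ m - (∑ δ, signedSum a δ ^ 2) / 6 + (∑ δ, signedSum a δ ^ 4) / 36 := by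
        rw [sum_add_distrib, sum_sub_distrib, ← sum_div, ← sum_div]
        simp
    _ ≤ 2 ^ m * (1 - σ / 12) := by
        rw [sum_signedSum_sq]
        nlinarith [sum_signedSum_pow_four_le a, mul_le_mul_of_nonneg_left
          (mul_le_of_le_one_left hσ ha) h2m.le]
    _ ≤ 2 ^ m * exp (-σ / 12) := by
        gcongr
        linarith [add_one_le_exp (-σ / 12)]

def signFlip {ι : Type*} (e : ι → Bool) (v : ι → ℝ) : ι → ℝ := fun j => boolSign (e j) * v j

lemma signFlip_involutive {ι : Type*} (e : ι → Bool) : Function.Involutive (signFlip e) :=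
  fun v => funext fun j => by simp [signFlip, ← mul_assoc]

lemma measurable_signFlip {ι : Type*} (e : ι → Bool) : Measurable (signFlip e) :=
  measurable_pi_lambda _ fun j => (measurable_pi_apply j).const_mul _

/-- Indexing `E` by columns first makes the sign pattern of column `j` the single argument `E j`. -/
def flipEntries {ι κ : Type*} (E : κ → ι → Bool) (A : ι → κ → ℝ) : ι → κ → ℝ :=
  fun i => signFlip (fun j => E j i) (A i)

lemma sum_exp_neg_sq_vecMul_flipEntries_le {m : ℕ} {κ : Type*} [Fintype κ] [DecidableEq κ]
    {x : Fin m → ℝ} (hx : ∑ i, x i ^ 2 ≤ 1) {A : Matrix (Fin m) κ ℝ} (hA : ∀ i j, A i j ^ 2 ≤ 1) :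
    ∑ E : κ → Fin m → Bool,
        exp (-(∑ j, Matrix.vecMul x (flipEntries E A) j ^ 2) / 6)
      ≤ 2 ^ (m * Fintype.card κ) * exp (-(∑ i, x i ^ 2 * ∑ j, A i j ^ 2) / 12) := by
  have hcol : ∀ (E : κ → Fin m → Bool) j, Matrix.vecMul x (flipEntries E A) j
      = signedSum (fun i => x i * A i j) (E j) := fun E j => by
    simp only [Matrix.vecMul, dotProduct, signedSum, flipEntries, signFlip]
    exact sum_congr rfl fun i _ => by ring
  have hcoef : ∀ j, ∑ i, (x i * A i j) ^ 2 ≤ 1 := fun j =>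
    (sum_le_sum fun i _ => by
      rw [mul_pow]; exact mul_le_of_le_one_right (sq_nonneg _) (hA i j)).trans hx
  calc ∑ E : κ → Fin m → Bool,
        exp (-(∑ j, Matrix.vecMul x (flipEntries E A) j ^ 2) / 6)
      = ∑ E : κ → Fin m → Bool, ∏ j, exp (-signedSum (fun i => x i * A i j) (E j) ^ 2 / 6) := by
        simp only [hcol, ← exp_sum, neg_div, sum_neg_distrib, sum_div]
    _ = ∏ j, ∑ δ, exp (-signedSum (fun i => x i * A i j) δ ^ 2 / 6) :=
        (Fintype.prod_sum fun j (δ : Fin m → Bool) =>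
          exp (-signedSum (fun i => x i * A i j) δ ^ 2 / 6)).symm
    _ ≤ ∏ j, (2 ^ m * exp (-(∑ i, (x i * A i j) ^ 2) / 12)) :=
        prod_le_prod (fun j _ => sum_nonneg fun _ _ => (exp_pos _).le)
          fun j _ => sum_exp_neg_signedSum_sq_le _ (hcoef j)
    _ = 2 ^ (m * Fintype.card κ) * exp (-(∑ i, x i ^ 2 * ∑ j, A i j ^ 2) / 12) := by
        rw [prod_mul_distrib, prod_const, card_univ, pow_mul, ← exp_sum]
        congr 2
        simp only [mul_pow, mul_sum, neg_div, sum_neg_distrib, sum_div]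
        rw [sum_comm]

theorem measurePreserving_uniformOn_of_involutive {Ω : Type*} [MeasurableSpace Ω]
    [MeasurableSingletonClass Ω] {s : Set Ω} (hs : MeasurableSet s) {f : Ω → Ω}
    (hf : Measurable f) (hinv : Function.Involutive f) (hfs : f ⁻¹' s = s) :
    MeasurePreserving f (uniformOn s) (uniformOn s) where
  measurable := hf
  map_eq := by
    ext t ht
    have himage : s ∩ f ⁻¹' t = f '' (s ∩ t) := by
      rw [hinv.image_eq_preimage_symm, Set.preimage_inter, hfs]
    rw [Measure.map_apply hf ht, uniformOn, cond_apply hs, cond_apply hs, himage,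
      Measure.count_injective_image hinv.injective]

theorem lintegral_le_of_sum_comp_le {α ι : Type*} [MeasurableSpace α] [Fintype ι] [Nonempty ι]
    {μ : Measure α} {g : ι → α → α} (hg : ∀ e, MeasurePreserving (g e) μ μ) {f : α → ℝ≥0∞}
    (hf : Measurable f) {c : ℝ≥0∞} (hfg : ∀ᵐ a ∂μ, ∑ e, f (g e a) ≤ Fintype.card ι * c) :
    ∫⁻ a, f a ∂μ ≤ c * μ Set.univ := by
  have hcard : (Fintype.card ι : ℝ≥0∞) ≠ 0 := by simp
  refine (ENNReal.mul_le_mul_iff_right hcard (ENNReal.natCast_ne_top _)).1 ?_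
  calc Fintype.card ι * ∫⁻ a, f a ∂μ = ∑ e, ∫⁻ a, f (g e a) ∂μ := by
        simp [(hg _).lintegral_comp hf]
    _ = ∫⁻ a, ∑ e, f (g e a) ∂μ :=
        (lintegral_finsetSum _ fun e _ => hf.comp (hg e).measurable).symm
    _ ≤ ∫⁻ _, Fintype.card ι * c ∂μ := lintegral_mono_ae hfg
    _ = Fintype.card ι * (c * μ Set.univ) := by rw [lintegral_const, mul_assoc]

section SignedRow

variable {n : ℕ} {v : Fin n → ℝ}

lemma signedRow_finite (n : ℕ) : (signedRow n).Finite :=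
  (Set.Finite.pi fun _ => (Set.toFinite {-1, 0, 1})).subset fun v hv i _ => by
    simpa using hv.1 i

lemma sq_le_one_of_mem_signedRow (hv : v ∈ signedRow n) (j : Fin n) : v j ^ 2 ≤ 1 := by
  rcases hv.1 j with h | h | h <;> simp [h]

lemma sum_sq_of_mem_signedRow (hn : Even n) (hv : v ∈ signedRow n) :
    ∑ j, v j ^ 2 = n / 2 := by
  classical
  have hsq : ∀ j, v j ^ 2 = if v j = 0 then 0 else 1 := fun j => by
    rcases hv.1 j with h | h | h <;> simp [h]
  have hzero : #{j | v j = 0} = n / 2 := by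
    rw [← hv.2, Nat.card_eq_fintype_card, Fintype.card_subtype]
  have hsplit := card_filter_add_card_filter_not (s := univ) (p := fun j => v j = 0)
  simp only [hsq, sum_ite, sum_const_zero, sum_const, zero_add, nsmul_one]
  rw [card_univ, Fintype.card_fin, hzero] at hsplit
  obtain ⟨k, rfl⟩ := hn
  rw [show #{j | ¬v j = 0} = k by omega]
  push_cast
  ring

lemma signFlip_mem_signedRow (e : Fin n → Bool) (hv : v ∈ signedRow n) :
    signFlip e v ∈ signedRow n := by
  refine ⟨fun j => ?_, ?_⟩
  · rcases hv.1 j with h | h | h <;> simp only [signFlip, h] <;> cases e j <;> norm_num [boolSign]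
  · simpa only [signFlip, mul_eq_zero, boolSign_ne_zero, false_or] using hv.2

lemma measurePreserving_signFlip (e : Fin n → Bool) :
    MeasurePreserving (signFlip e) (uniformOn (signedRow n)) (uniformOn (signedRow n)) := by
  refine measurePreserving_uniformOn_of_involutive (signedRow_finite n).measurableSet
    (measurable_signFlip e) (signFlip_involutive e) (Set.ext fun v => ⟨fun hv => ?_,
      signFlip_mem_signedRow e⟩)
  simpa [signFlip_involutive e v] using signFlip_mem_signedRow e hv

lemma sum_exp_neg_sq_vecMul_flipEntries_le_of_mem_signedRow (hn : Even n) {x : Fin n → ℝ}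
    (hx : ∑ i, x i ^ 2 = 1) {A : Fin n → Fin n → ℝ} (hA : ∀ i, A i ∈ signedRow n) :
    ∑ E : Fin n → Fin n → Bool, exp (-(∑ j, Matrix.vecMul x (flipEntries E A) j ^ 2) / 6)
      ≤ 2 ^ (n * n) * exp (-n / 24) := by
  refine (sum_exp_neg_sq_vecMul_flipEntries_le hx.le
    fun i j => sq_le_one_of_mem_signedRow (hA i) j).trans_eq ?_
  simp only [sum_sq_of_mem_signedRow hn (hA _), ← sum_mul, hx, one_mul, Fintype.card_fin]
  ring_nf

end SignedRow

lemma measurable_ofReal_exp_neg_sq_vecMul {ι κ : Type*} [Fintype ι] [Fintype κ] (x : ι → ℝ) :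
    Measurable fun A : ι → κ → ℝ => ENNReal.ofReal (exp (-(∑ j, Matrix.vecMul x A j ^ 2) / 6)) := by
  simp only [Matrix.vecMul, dotProduct]
  fun_prop

theorem lintegral_exp_neg_sq_vecMul_le {n : ℕ} (hn : Even n) {x : Fin n → ℝ}
    (hx : ∑ i, x i ^ 2 = 1) :
    ∫⁻ A, ENNReal.ofReal (exp (-(∑ j, Matrix.vecMul x A j ^ 2) / 6))
        ∂Measure.pi (fun _ : Fin n => uniformOn (signedRow n))
      ≤ ENNReal.ofReal (exp (-n / 24)) := by
  set μ := Measure.pi fun _ : Fin n => uniformOn (signedRow n)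
  have hrows : ∀ᵐ A ∂μ, ∀ i, A i ∈ signedRow n := ae_all_iff.2 fun i =>
    Measure.tendsto_eval_ae_ae.eventually (ae_cond_mem (signedRow_finite n).measurableSet)
  have hμ : μ Set.univ ≤ 1 := by
    rw [Measure.pi_univ]
    exact prod_le_one' fun _ _ => prob_le_one
  have hflip : ∀ E : Fin n → Fin n → Bool, MeasurePreserving (flipEntries E) μ μ :=
    fun E => measurePreserving_pi _ _ fun i => measurePreserving_signFlip fun j => E j i
  have hsum : ∀ A : Fin n → Fin n → ℝ, (∀ i, A i ∈ signedRow n) →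
      ∑ E : Fin n → Fin n → Bool,
          ENNReal.ofReal (exp (-(∑ j, Matrix.vecMul x (flipEntries E A) j ^ 2) / 6))
        ≤ Fintype.card (Fin n → Fin n → Bool) * ENNReal.ofReal (exp (-n / 24)) := by
    intro A hA
    rw [← ENNReal.ofReal_sum_of_nonneg fun _ _ => (exp_pos _).le, ← ENNReal.ofReal_natCast,
      ← ENNReal.ofReal_mul (by positivity)]
    refine ENNReal.ofReal_le_ofReal
      ((sum_exp_neg_sq_vecMul_flipEntries_le_of_mem_signedRow hn hx hA).trans_eq ?_)
    simp only [Fintype.card_fun, Fintype.card_bool, Fintype.card_fin]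
    push_cast
    ring
  calc _ ≤ ENNReal.ofReal (exp (-n / 24)) * μ Set.univ :=
        lintegral_le_of_sum_comp_le hflip (measurable_ofReal_exp_neg_sq_vecMul x)
          (hrows.mono hsum)
    _ ≤ ENNReal.ofReal (exp (-n / 24)) := mul_le_of_le_one_right' hμ

lemma pnorm_sq {ι : Type*} [Fintype ι] (y : ι → ℝ) : pnorm y ^ 2 = ∑ i, y i ^ 2 :=
  sq_sqrt (Fintype.sum_nonneg fun i => sq_nonneg (y i))

theorem measure_pnorm_vecMul_le_le_exp_mul_lintegral {Ω ι κ : Type*} [MeasurableSpace Ω]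
    [Fintype ι] [Fintype κ] {P : Measure Ω} {A : Ω → ι → κ → ℝ} (hA : AEMeasurable A P)
    (x : ι → ℝ) (t : ℝ) :
    P {ω | pnorm (Matrix.vecMul x (A ω)) ≤ t}
      ≤ ENNReal.ofReal (exp (t ^ 2 / 6)) *
        ∫⁻ B, ENNReal.ofReal (exp (-(∑ j, Matrix.vecMul x B j ^ 2) / 6)) ∂P.map A := by
  have hmeas := measurable_ofReal_exp_neg_sq_vecMul (κ := κ) x
  have hevent : {ω | pnorm (Matrix.vecMul x (A ω)) ≤ t} ⊆ {ω | ENNReal.ofReal (exp (-t ^ 2 / 6))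
      ≤ ENNReal.ofReal (exp (-(∑ j, Matrix.vecMul x (A ω) j ^ 2) / 6))} := fun ω hω => by
    have hsq := pow_le_pow_left₀ (sqrt_nonneg _) hω 2
    rw [← pnorm, pnorm_sq] at hsq
    exact ENNReal.ofReal_le_ofReal (exp_le_exp.2 (by linarith))
  calc P {ω | pnorm (Matrix.vecMul x (A ω)) ≤ t}
      ≤ (∫⁻ ω, ENNReal.ofReal (exp (-(∑ j, Matrix.vecMul x (A ω) j ^ 2) / 6)) ∂P)
          / ENNReal.ofReal (exp (-t ^ 2 / 6)) :=
        (measure_mono hevent).trans (meas_ge_le_lintegral_div (hmeas.comp_aemeasurable hA)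
          (by simp [exp_pos]) ENNReal.ofReal_ne_top)
    _ = _ := by
        rw [lintegral_map' hmeas.aemeasurable hA, ENNReal.div_eq_inv_mul,
          ← ENNReal.ofReal_inv_of_pos (exp_pos _), ← exp_neg, neg_div, neg_neg]

/-- for all sufficiently large even `n` and every fixed unit vector `x`,
`P(‖x^⊤ M_n‖₂ ≤ √n/36) ≤ e^{-n/400}` for the signed random combinatorial matrix `M_n`. -/
theorem stmt17 :
    ∃ N : ℕ, ∀ n : ℕ, N ≤ n → Even n →
    ∀ (Ω : Type) (_ : MeasurableSpace Ω) (P : Measure Ω), IsProbabilityMeasure P →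
    ∀ M : Ω → Matrix (Fin n) (Fin n) ℝ,
      (∀ i, Measurable fun ω => M ω i) →
      iIndepFun (fun i ω => M ω i) P →
      (∀ i, Measure.map (fun ω => M ω i) P = uniformOn (signedRow n)) →
    ∀ x : Fin n → ℝ, pnorm x = 1 →
      P {ω | pnorm (Matrix.vecMul x (M ω)) ≤ Real.sqrt n / 36} ≤
        ENNReal.ofReal (Real.exp (-(n : ℝ) / 400)) := by
  refine ⟨0, fun n _ hn Ω _ P _ M hrows hindep hlaw x hx => ?_⟩
  have hjoint : P.map (fun ω i => M ω i) = Measure.pi fun _ => uniformOn (signedRow n) := by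
    rw [(iIndepFun_iff_map_fun_eq_pi_map fun i => (hrows i).aemeasurable).1 hindep]
    simp only [hlaw]
  calc P {ω | pnorm (Matrix.vecMul x (M ω)) ≤ √n / 36}
      ≤ ENNReal.ofReal (exp ((√n / 36) ^ 2 / 6)) * ENNReal.ofReal (exp (-n / 24)) := by
        refine (measure_pnorm_vecMul_le_le_exp_mul_lintegral
          (measurable_pi_lambda _ hrows).aemeasurable x _).trans ?_
        rw [hjoint]
        gcongr
        exact lintegral_exp_neg_sq_vecMul_le hn (by rw [← pnorm_sq, hx, one_pow])
    _ ≤ ENNReal.ofReal (exp (-n / 400)) := by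
        rw [← ENNReal.ofReal_mul (exp_pos _).le, ← exp_add, div_pow, sq_sqrt (Nat.cast_nonneg n)]
        gcongr
        linarith [(Nat.cast_nonneg n : (0 : ℝ) ≤ n)]

end
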